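/- arXiv:1703.02693 — 3 statements merged into one kernel-verified Lean document; each statement's English description precedes it below -/
import Mathlib

section
/- Theorem 2(i) (Threshold maximality at admission times). For the Priority-Based Aggregation process, let z*_t = max_{s∈[0,t]∩T^0} z_s be the running maximum of the thresholds. Then at every time t ∈ T^0 at which the arriving key k_t is admitted to a full reservoir (i.e., k_t is not the discarded key d_t), the current threshold equals the running maximum: z*_t = z_t. -/
/-!
Priority-Based Aggregation (PBA), Theorem 1 (unbiasedness).

The PBA process is modelled deterministically as a function of the stream
`(keys t, xs t)` (items arrive at times `t = 1, 2, …`) and of the family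
`u t` of uniform variates, where `u t` is the fresh uniform random variable
generated at time `t` in case the arriving key is not in the current sample.

The state records the sample keyset `sample` (capacity `m`), the cumulative
weights `W k` since the last admission of `k`, the uniform variate `uu k`
attached to `k` at its admission, the retention probabilities `q k`
(eq. (6) of the paper), the lazily computed probabilities `qstar k`
(eq. (8)), the unbiased estimates `est k` (eq. (7)), the current threshold
`z` (the minimum priority at a discard step, `0` otherwise), the running
maximal threshold `zstar`, the discarded key of the current step, and a flag
`newkey` recording whether the current time lies in `T⁰`.
-/

open MeasureTheory

structure PBAState (K : Type*) where
  sample : Finset K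
  W : K → ℝ
  uu : K → ℝ
  q : K → ℝ
  qstar : K → ℝ
  est : K → ℝ
  z : ℝ
  zstar : ℝ
  discard : Option K
  newkey : Bool

/-- The key of minimal priority, ties broken by the order on `K`. -/
noncomputable def argminKey {K : Type*} [LinearOrder K] (s : Finset K) (f : K → ℝ)
    (h : s.Nonempty) : K :=
  (s.filter fun k => f k = s.inf' h f).min' (by
    obtain ⟨k, hk, hfk⟩ := Finset.exists_mem_eq_inf' h f
    exact ⟨k, Finset.mem_filter.mpr ⟨hk, hfk.symm⟩⟩)

/-- One step of PBA: process the arriving item `(k, x)`, with `ut` the fresh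
uniform variate available at this time. -/
noncomputable def pbaStep {K : Type*} [LinearOrder K] (m : ℕ) (k : K) (x : ℝ) (ut : ℝ)
    (st : PBAState K) : PBAState K :=
  if k ∈ st.sample then
    -- aggregate to an existing key
    { st with
      W := Function.update st.W k (st.W k + x)
      est := Function.update st.est k (st.est k + x)
      z := 0
      discard := none
      newkey := false }
  else
    -- provisional admission of the new key
    let W' := Function.update st.W k x
    let uu' := Function.update st.uu k ut
    let q' := Function.update st.q k 1
    let qstar' := Function.update st.qstar k 1
    let est' := Function.update st.est k x
    let s' := insert k st.sample
    have hs' : s'.Nonempty := Finset.insert_nonempty k st.sample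
    if s'.card ≤ m then
      { sample := s', W := W', uu := uu', q := q', qstar := qstar', est := est',
        z := 0, zstar := st.zstar, discard := none, newkey := true }
    else
      -- discard the key of minimal priority and renormalize the estimates
      let prio : K → ℝ := fun k' => W' k' / uu' k'
      let zt : ℝ := s'.inf' hs' prio
      let kstar : K := argminKey s' prio hs'
      let zs : ℝ := max st.zstar zt
      let survivors : Finset K := s'.erase kstar
      let qnew : K → ℝ := fun k' => min (q' k') (W' k' / zt)
      let qstarnew : K → ℝ := fun k' =>
        if k' = k then min 1 (W' k' / zs) else min (qstar' k') (W' k' / zs)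
      { sample := survivors
        W := W'
        uu := uu'
        q := fun k' => if k' ∈ survivors then qnew k' else q' k'
        qstar := fun k' => if k' ∈ survivors then qstarnew k' else qstar' k'
        est := fun k' => if k' ∈ survivors then est' k' * q' k' / qnew k' else 0
        z := zt
        zstar := zs
        discard := some kstar
        newkey := true }

/-- The initial (empty) state. -/
def pbaInit (K : Type*) : PBAState K :=
  { sample := ∅, W := fun _ => 0, uu := fun _ => 1, q := fun _ => 1,
    qstar := fun _ => 1, est := fun _ => 0, z := 0, zstar := 0,
    discard := none, newkey := false }

/-- The PBA trajectory: the state after processing items `1, …, t`. -/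
noncomputable def pbaTraj {K : Type*} [LinearOrder K] (m : ℕ) (keys : ℕ → K) (xs : ℕ → ℝ)
    (u : ℕ → ℝ) : ℕ → PBAState K
  | 0 => pbaInit K
  | t + 1 => pbaStep m (keys (t + 1)) (xs (t + 1)) (u (t + 1)) (pbaTraj m keys xs u t)

/-- The true aggregate `X_{k,t} = ∑_{s ≤ t, k_s = k} x_s`. -/
noncomputable def trueAgg {K : Type*} [DecidableEq K] (keys : ℕ → K) (xs : ℕ → ℝ)
    (k : K) (t : ℕ) : ℝ :=
  ∑ s ∈ Finset.Icc 1 t, if keys s = k then xs s else 0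


lemma argminKey_mem {K : Type*} [LinearOrder K] (s : Finset K) (f : K → ℝ)
    (h : s.Nonempty) : argminKey s f h ∈ s := by
  have := Finset.min'_mem (s.filter fun k => f k = s.inf' h f) (by
    obtain ⟨k, hk, hfk⟩ := Finset.exists_mem_eq_inf' h f
    exact ⟨k, Finset.mem_filter.mpr ⟨hk, hfk.symm⟩⟩)
  exact (Finset.mem_filter.mp this).1

lemma argminKey_spec {K : Type*} [LinearOrder K] (s : Finset K) (f : K → ℝ)
    (h : s.Nonempty) : f (argminKey s f h) = s.inf' h f := by
  have := Finset.min'_mem (s.filter fun k => f k = s.inf' h f) (by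
    obtain ⟨k, hk, hfk⟩ := Finset.exists_mem_eq_inf' h f
    exact ⟨k, Finset.mem_filter.mpr ⟨hk, hfk.symm⟩⟩)
  exact (Finset.mem_filter.mp this).2

def PBAInv {K : Type*} (m : ℕ) (st : PBAState K) : Prop :=
  0 ≤ st.zstar ∧
  (∀ k ∈ st.sample, 0 < st.uu k ∧ st.zstar ≤ st.W k / st.uu k) ∧
  (st.sample.card < m → st.zstar = 0)

lemma pba_step_inv {K : Type*} [LinearOrder K] (m : ℕ) (k : K) (x ut : ℝ)
    (hx : 0 < x) (hut : 0 < ut) (st : PBAState K) (hinv : PBAInv m st) :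
    PBAInv m (pbaStep m k x ut st) := by
  obtain ⟨h0, hmem, hcard⟩ := hinv
  rw [pbaStep]
  by_cases hk : k ∈ st.sample
  · simp only [if_pos hk]
    refine ⟨h0, fun k' hk' => ?_, hcard⟩
    obtain ⟨hu', hw'⟩ := hmem k' hk'
    refine ⟨hu', ?_⟩
    show st.zstar ≤ Function.update st.W k (st.W k + x) k' / st.uu k'
    by_cases hkk : k' = k
    · subst hkk
      rw [Function.update_self]
      calc st.zstar ≤ st.W k' / st.uu k' := hw'
        _ ≤ (st.W k' + x) / st.uu k' := (div_le_div_iff_of_pos_right hu').mpr (by linarith)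
    · rwa [Function.update_of_ne hkk]
  · simp only [if_neg hk]
    by_cases hc : (insert k st.sample).card ≤ m
    · simp only [if_pos hc]
      have hlt : st.sample.card < m := by
        rwa [Finset.card_insert_of_notMem hk] at hc
      have hz0 : st.zstar = 0 := hcard hlt
      refine ⟨h0, fun k' hk' => ?_, fun _ => hz0⟩
      show 0 < Function.update st.uu k ut k' ∧
        st.zstar ≤ Function.update st.W k x k' / Function.update st.uu k ut k'
      by_cases hkk : k' = k
      · subst hkk
        rw [Function.update_self, Function.update_self, hz0]
        exact ⟨hut, div_nonneg hx.le hut.le⟩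
      · rw [Function.update_of_ne hkk, Function.update_of_ne hkk]
        have hk'' : k' ∈ st.sample := by
          have : k' ∈ insert k st.sample := hk'
          rcases Finset.mem_insert.mp this with h | h
          · exact absurd h hkk
          · exact h
        exact hmem k' hk''
    · simp only [if_neg hc]
      set W' := Function.update st.W k x with hW'
      set uu' := Function.update st.uu k ut with huu'
      set s' := insert k st.sample with hs'def
      have hs' : s'.Nonempty := Finset.insert_nonempty k st.sample
      set prio : K → ℝ := fun k' => W' k' / uu' k' with hprio
      set zt : ℝ := s'.inf' hs' prio with hzt
      set kstar : K := argminKey s' prio hs' with hkstar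
      have hold : ∀ k', k' ≠ k → prio k' = st.W k' / st.uu k' := by
        intro k' hne
        simp only [hprio, hW', huu', Function.update_of_ne hne]
      have hprio_old : ∀ k' ∈ st.sample, st.zstar ≤ prio k' := by
        intro k' hk'
        have hne : k' ≠ k := fun h => hk (h ▸ hk')
        rw [hold k' hne]
        exact (hmem k' hk').2
      refine ⟨?_, fun k' hk' => ?_, ?_⟩
      · show 0 ≤ max st.zstar zt
        exact le_trans h0 (le_max_left _ _)
      · have hk'e : k' ∈ s'.erase kstar := hk'
        have hk's' : k' ∈ s' := Finset.mem_of_mem_erase hk'e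
        have hkne : k' ≠ kstar := Finset.ne_of_mem_erase hk'e
        have hzt_le : zt ≤ prio k' := Finset.inf'_le prio hk's'
        have hu' : 0 < uu' k' := by
          by_cases hkk : k' = k
          · subst hkk; rw [huu', Function.update_self]; exact hut
          · rw [huu', Function.update_of_ne hkk]
            rcases Finset.mem_insert.mp hk's' with h | h
            · exact absurd h hkk
            · exact (hmem k' h).1
        refine ⟨hu', ?_⟩
        show max st.zstar zt ≤ prio k'
        refine max_le ?_ hzt_le
        by_cases hkk : k' = k
        · subst hkk
          have hksne : kstar ≠ k' := fun h => hkne h.symm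
          have hksmem : kstar ∈ st.sample := by
            rcases Finset.mem_insert.mp (argminKey_mem s' prio hs') with h | h
            · exact absurd h hksne
            · exact h
          calc st.zstar ≤ prio kstar := hprio_old kstar hksmem
            _ = zt := argminKey_spec s' prio hs'
            _ ≤ prio k' := hzt_le
        · exact hprio_old k' (by
            rcases Finset.mem_insert.mp hk's' with h | h
            · exact absurd h hkk
            · exact h)
      · intro hlt
        exfalso
        have hlt' : (s'.erase kstar).card < m := hlt
        have h1 : m < s'.card := lt_of_not_ge hc
        have h2 : (s'.erase kstar).card = s'.card - 1 :=
          Finset.card_erase_of_mem (argminKey_mem s' prio hs')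
        omega

lemma pba_inv {K : Type*} [LinearOrder K]
    (m : ℕ) (keys : ℕ → K) (xs : ℕ → ℝ) (hxs : ∀ t, 0 < xs t)
    (u : ℕ → ℝ) (hu : ∀ t, u t ∈ Set.Ioc (0 : ℝ) 1) (t : ℕ) :
    PBAInv m (pbaTraj m keys xs u t) := by
  induction t with
  | zero =>
    refine ⟨le_refl 0, fun k hk => ?_, fun _ => rfl⟩
    simp [pbaTraj, pbaInit] at hk
  | succ t ih =>
    exact pba_step_inv m (keys (t + 1)) (xs (t + 1)) (u (t + 1))
      (hxs (t + 1)) ((hu (t + 1)).1) _ ih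

/-- **Theorem 2(i) (Threshold maximality at admission times).** Pathwise, for
any uniform variates `u t ∈ (0,1]`: at every time `t ∈ T⁰` at which a discard
occurs and the arriving key `keys t` is admitted (i.e. it is not the discarded
key `d`), the current threshold `z_t` equals the running maximum
`z*_t = max_{s ∈ [0,t] ∩ T⁰} z_s` of the thresholds. -/
theorem pba_threshold_max
    {K : Type*} [LinearOrder K]
    (m : ℕ) (hm : 1 ≤ m)
    (keys : ℕ → K) (xs : ℕ → ℝ) (hxs : ∀ t, 0 < xs t)
    (u : ℕ → ℝ) (hu : ∀ t, u t ∈ Set.Ioc (0 : ℝ) 1)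
    (t : ℕ) (d : K)
    (hd : (pbaTraj m keys xs u t).discard = some d)
    (hadm : keys t ≠ d) :
    (pbaTraj m keys xs u t).zstar = (pbaTraj m keys xs u t).z := by
  cases t with
  | zero => simp [pbaTraj, pbaInit] at hd
  | succ s =>
    obtain ⟨-, hmem, -⟩ := pba_inv m keys xs hxs u hu s
    set st := pbaTraj m keys xs u s with hst
    set k := keys (s + 1) with hkdef
    set x := xs (s + 1)
    set ut := u (s + 1)
    have hstep : pbaTraj m keys xs u (s + 1) = pbaStep m k x ut st := rfl
    rw [hstep] at hd ⊢
    rw [pbaStep] at hd ⊢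
    by_cases hk : k ∈ st.sample
    · simp only [if_pos hk] at hd
      cases hd
    · simp only [if_neg hk] at hd ⊢
      by_cases hc : (insert k st.sample).card ≤ m
      · simp only [if_pos hc] at hd
        cases hd
      · simp only [if_neg hc] at hd ⊢
        set W' := Function.update st.W k x with hW'
        set uu' := Function.update st.uu k ut with huu'
        set s' := insert k st.sample with hs'def
        have hs' : s'.Nonempty := Finset.insert_nonempty k st.sample
        set prio : K → ℝ := fun k' => W' k' / uu' k' with hprio
        set zt : ℝ := s'.inf' hs' prio with hzt
        set kstar : K := argminKey s' prio hs' with hkstar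
        have hd' : some kstar = some d := hd
        have hdk : d = kstar := (Option.some.inj hd').symm
        have hne : kstar ≠ k := by
          rw [hdk] at hadm
          exact fun h => hadm h.symm
        have hksmem : kstar ∈ st.sample := by
          rcases Finset.mem_insert.mp (argminKey_mem s' prio hs') with h | h
          · exact absurd h hne
          · exact h
        have hold : prio kstar = st.W kstar / st.uu kstar := by
          simp only [hprio, hW', huu', Function.update_of_ne hne]
        have hle : st.zstar ≤ zt := by
          rw [hzt, ← argminKey_spec s' prio hs', hold]
          exact (hmem kstar hksmem).2
        show max st.zstar zt = zt
        exact max_eq_right hle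
end

section
/- Single-item priority estimate unbiasedness. Let u be a random variable uniformly distributed on (0,1], and let x > 0 and z > 0 be fixed real numbers. Define the estimator X̂ = max(x, z)·1{x/u > z}, i.e., X̂ equals max(x,z) on the event that the priority x/u exceeds the threshold z, and 0 otherwise. Then E[X̂] = x. -/
open MeasureTheory

/-- **Single-item priority estimate unbiasedness.** If `u` is uniform on
`(0,1]` and `x, z > 0`, then the estimator `X̂ = max(x,z)·1{x/u > z}`
satisfies `E[X̂] = x`. -/
theorem single_item_priority_unbiased
    {Ω : Type*} [MeasurableSpace Ω] (P : Measure Ω) [IsProbabilityMeasure P]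
    (u : Ω → ℝ) (humeas : Measurable u)
    (hunif : P.map u = volume.restrict (Set.Ioc (0 : ℝ) 1))
    (x z : ℝ) (hx : 0 < x) (hz : 0 < z) :
    ∫ ω, (if x / u ω > z then max x z else 0) ∂P = x := by
  have hmeas : Measurable (fun t : ℝ => if x / t > z then max x z else 0) := by
    apply Measurable.ite _ measurable_const measurable_const
    exact measurableSet_lt measurable_const (measurable_const.div measurable_id)
  have h1 : ∫ ω, (if x / u ω > z then max x z else 0) ∂P
      = ∫ t in Set.Ioc (0:ℝ) 1, (if x / t > z then max x z else 0) := by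
    rw [← hunif, integral_map humeas.aemeasurable hmeas.aestronglyMeasurable]
  rw [h1]
  have h2 : ∫ t in Set.Ioc (0:ℝ) 1, (if x / t > z then max x z else 0)
      = ∫ t in Set.Ioc (0:ℝ) 1, Set.indicator (Set.Iio (x/z)) (fun _ => max x z) t := by
    apply setIntegral_congr_fun measurableSet_Ioc
    intro t ht
    simp only [Set.indicator, Set.mem_Iio, gt_iff_lt]
    congr 1
    simp only [eq_iff_iff]
    rw [lt_div_iff₀ ht.1, lt_div_iff₀ hz, mul_comm]
  rw [h2, setIntegral_indicator measurableSet_Iio, setIntegral_const, smul_eq_mul]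
  rcases le_or_gt (x / z) 1 with hle | hgt
  · have hseq : Set.Ioc (0:ℝ) 1 ∩ Set.Iio (x/z) = Set.Ioo 0 (x/z) := by
      ext t
      simp only [Set.mem_inter_iff, Set.mem_Ioc, Set.mem_Iio, Set.mem_Ioo]
      constructor
      · rintro ⟨⟨h1, _⟩, h3⟩; exact ⟨h1, h3⟩
      · rintro ⟨h1, h2'⟩; exact ⟨⟨h1, le_trans (le_of_lt h2') hle⟩, h2'⟩
    have hxz : x ≤ z := (div_le_one hz).mp hle
    rw [hseq, measureReal_def, Real.volume_Ioo, sub_zero, ENNReal.toReal_ofReal (by positivity),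
      max_eq_right hxz]
    field_simp
  · have hseq : Set.Ioc (0:ℝ) 1 ∩ Set.Iio (x/z) = Set.Ioc 0 1 := by
      apply Set.inter_eq_self_of_subset_left
      intro t ht
      exact lt_of_le_of_lt ht.2 hgt
    have hxz : z ≤ x := le_of_lt ((one_lt_div hz).mp hgt)
    rw [hseq, measureReal_def, Real.volume_Ioc, sub_zero, ENNReal.toReal_ofReal (by norm_num),
      max_eq_left hxz, one_mul]
end

section
/- Priority sampling unbiasedness (unique keys). Let n > m ≥ 1, let x_1,…,x_n be positive real numbers, and let u_1,…,u_n be independent random variables, each uniformly distributed on (0,1]. Define priorities r_i = x_i/u_i, and let z denote the (m+1)-st largest value among r_1,…,r_n. Define x̂_i = max(x_i, z) if r_i is among the m largest priorities (i.e., r_i > z, where almost surely there are no ties), and x̂_i = 0 otherwise. Then for every i ∈ {1,…,n}, E[x̂_i] = x_i. -/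
open MeasureTheory

/-- `kthLargest r j` is the `(j+1)`-st largest value among `r 0, …, r (n-1)`
(so `kthLargest r m` is the `(m+1)`-st largest value): sort the list of values
in nonincreasing order and take the entry at index `j`. -/
noncomputable def kthLargest {n : ℕ} (r : Fin n → ℝ) (j : ℕ) : ℝ :=
  ((List.ofFn r).insertionSort fun a b => b ≤ a).getD j 0

namespace PriorityAux

instance : IsTotal ℝ (fun a b => b ≤ a) := ⟨fun a b => le_total b a⟩
instance : IsTrans ℝ (fun a b => b ≤ a) := ⟨fun _ _ _ h1 h2 => le_trans h2 h1⟩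
instance : IsRefl ℝ (fun a b => b ≤ a) := ⟨fun _ => le_refl _⟩
instance : Std.Total (fun a b : ℝ => b ≤ a) := ⟨fun a b => le_total b a⟩
instance : Std.Refl (fun a b : ℝ => b ≤ a) := ⟨fun _ => le_refl _⟩

/-- descending sort -/
noncomputable def dsort (l : List ℝ) : List ℝ := l.insertionSort (fun a b => b ≤ a)

lemma dsort_perm (l : List ℝ) : (dsort l).Perm l := List.perm_insertionSort _ l

lemma dsort_length (l : List ℝ) : (dsort l).length = l.length :=
  List.length_insertionSort _ l

lemma dsort_sorted (l : List ℝ) : (dsort l).Pairwise (fun a b => b ≤ a) :=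
  List.pairwise_insertionSort _ l

lemma dsort_anti (l : List ℝ) {j k : ℕ} (hjk : j ≤ k) (hk : k < l.length) :
    (dsort l).getD k 0 ≤ (dsort l).getD j 0 := by
  have hk' : k < (dsort l).length := by rwa [dsort_length]
  have hj' : j < (dsort l).length := lt_of_le_of_lt hjk hk'
  rw [List.getD_eq_getElem _ _ hk', List.getD_eq_getElem _ _ hj']
  have := (dsort_sorted l).rel_get_of_le (a := ⟨j, hj'⟩) (b := ⟨k, hk'⟩) hjk
  simpa using this

lemma dsort_getD_mem (l : List ℝ) {k : ℕ} (hk : k < l.length) :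
    (dsort l).getD k 0 ∈ l := by
  have hk' : k < (dsort l).length := by rwa [dsort_length]
  rw [List.getD_eq_getElem _ _ hk']
  exact (dsort_perm l).mem_iff.mp (List.getElem_mem _)

/-- P1 : at least k+1 elements are ≥ any y ≤ S[k] -/
lemma count_ge_ge (l : List ℝ) {k : ℕ} (hk : k < l.length) {y : ℝ}
    (hy : y ≤ (dsort l).getD k 0) :
    k + 1 ≤ l.countP (fun z => y ≤ z) := by
  have hk' : k < (dsort l).length := by rwa [dsort_length]
  rw [← (dsort_perm l).countP_eq _]
  have hsub : ((dsort l).take (k+1)).Sublist (dsort l) := List.take_sublist _ _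
  have htk : ((dsort l).take (k+1)).length = k + 1 := by
    rw [List.length_take]; omega
  have hall : ∀ a ∈ (dsort l).take (k+1), (fun z => decide (y ≤ z)) a = true := by
    intro a ha
    rw [List.mem_iff_getElem] at ha
    obtain ⟨j, hj, rfl⟩ := ha
    rw [htk] at hj
    rw [List.getElem_take]
    have hj' : j ≤ k := by omega
    have h0 : (dsort l).getD k 0 ≤ (dsort l).getD j 0 := dsort_anti l hj' hk
    have hj'' : j < (dsort l).length := by omega
    rw [List.getD_eq_getElem _ _ hk', List.getD_eq_getElem _ _ hj''] at h0
    rw [List.getD_eq_getElem _ _ hk'] at hy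
    simpa using le_trans hy h0
  calc k + 1 = ((dsort l).take (k+1)).countP (fun z => y ≤ z) := by
        rw [List.countP_eq_length.mpr hall, htk]
    _ ≤ (dsort l).countP (fun z => y ≤ z) := hsub.countP_le

/-- P2 : at most k elements are > any y ≥ S[k] -/
lemma count_gt_le (l : List ℝ) {k : ℕ} (hk : k < l.length) {y : ℝ}
    (hy : (dsort l).getD k 0 ≤ y) :
    l.countP (fun z => y < z) ≤ k := by
  have hk' : k < (dsort l).length := by rwa [dsort_length]
  rw [← (dsort_perm l).countP_eq _]
  have hsplit : dsort l = (dsort l).take k ++ (dsort l).drop k :=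
    (List.take_append_drop _ _).symm
  rw [hsplit, List.countP_append]
  have h1 : ((dsort l).take k).countP (fun z => y < z) ≤ k :=
    le_trans List.countP_le_length (by rw [List.length_take]; omega)
  have h2 : ((dsort l).drop k).countP (fun z => y < z) = 0 := by
    rw [List.countP_eq_zero]
    intro a ha
    rw [List.mem_iff_getElem] at ha
    obtain ⟨j, hj, rfl⟩ := ha
    rw [List.getElem_drop]
    have hkj : k + j < (dsort l).length := by
      rw [List.length_drop] at hj; omega
    have hkj2 : k + j < l.length := by rwa [dsort_length] at hkj
    have h0 : (dsort l).getD (k+j) 0 ≤ (dsort l).getD k 0 := dsort_anti l (by omega) hkj2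
    rw [List.getD_eq_getElem _ _ hkj, List.getD_eq_getElem _ _ hk'] at h0
    rw [List.getD_eq_getElem _ _ hk'] at hy
    simpa using not_lt.mpr (le_trans h0 hy)
  omega

/-- B1 -/
lemma le_dsort_of_count (l : List ℝ) {k : ℕ} (hk : k < l.length) {y : ℝ}
    (h : k + 1 ≤ l.countP (fun z => y ≤ z)) :
    y ≤ (dsort l).getD k 0 := by
  by_contra hlt
  push_neg at hlt
  have h1 : l.countP (fun z => y ≤ z) ≤ l.countP (fun z => (dsort l).getD k 0 < z) := by
    apply List.countP_mono_left
    intro a _ ha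
    simp only [decide_eq_true_eq] at ha ⊢
    exact lt_of_lt_of_le hlt ha
  have h2 := count_gt_le l hk (le_refl ((dsort l).getD k 0))
  omega

/-- B2 -/
lemma dsort_le_of_count (l : List ℝ) {k : ℕ} (hk : k < l.length) {y : ℝ}
    (h : l.countP (fun z => y < z) ≤ k) :
    (dsort l).getD k 0 ≤ y := by
  by_contra hlt
  push_neg at hlt
  have h1 : l.countP (fun z => (dsort l).getD k 0 ≤ z) ≤ l.countP (fun z => y < z) := by
    apply List.countP_mono_left
    intro a _ ha
    simp only [decide_eq_true_eq] at ha ⊢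
    exact lt_of_lt_of_le hlt ha
  have h2 := count_ge_ge l hk (le_refl ((dsort l).getD k 0))
  omega

/-- iff characterization used for measurability -/
lemma dsort_le_iff (l : List ℝ) {k : ℕ} (hk : k < l.length) (y : ℝ) :
    (dsort l).getD k 0 ≤ y ↔ l.countP (fun z => y < z) ≤ k :=
  ⟨fun h => count_gt_le l hk h, fun h => dsort_le_of_count l hk h⟩

end PriorityAux

namespace PriorityAux

lemma ofFn_perm_cons {n : ℕ} (r : Fin n → ℝ) (i : Fin n) :
    (List.ofFn r).Perm (r i :: (List.ofFn r).eraseIdx i) := by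
  have hi : (i : ℕ) < (List.ofFn r).length := by simp [i.isLt]
  have h1 : List.ofFn r =
      (List.ofFn r).take i ++ (List.ofFn r)[(i:ℕ)] :: (List.ofFn r).drop (i+1) := by
    conv_lhs => rw [← List.take_append_drop (i : ℕ) (List.ofFn r)]
    rw [List.drop_eq_getElem_cons hi]
  have h2 : (List.ofFn r).eraseIdx i =
      (List.ofFn r).take i ++ (List.ofFn r).drop (i+1) :=
    List.eraseIdx_eq_take_drop_succ _ _
  rw [h2]
  conv_lhs => rw [h1]
  rw [List.getElem_ofFn]
  exact List.perm_middle

lemma countP_ofFn_eraseIdx {n : ℕ} (r : Fin n → ℝ) (i : Fin n) (p : ℝ → Bool) :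
    (List.ofFn r).countP p =
      ((List.ofFn r).eraseIdx i).countP p + if p (r i) then 1 else 0 := by
  rw [(ofFn_perm_cons r i).countP_eq p, List.countP_cons]

lemma length_eraseIdx_ofFn {n : ℕ} (r : Fin n → ℝ) (i : Fin n) :
    ((List.ofFn r).eraseIdx i).length = n - 1 := by
  rw [List.length_eraseIdx]
  simp [i.isLt]

lemma eraseIdx_ofFn_congr {n : ℕ} (f g : Fin n → ℝ) (i : Fin n)
    (h : ∀ j, j ≠ i → f j = g j) :
    (List.ofFn f).eraseIdx i = (List.ofFn g).eraseIdx i := by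
  apply List.ext_getElem
  · rw [length_eraseIdx_ofFn, length_eraseIdx_ofFn]
  · intro k h1 h2
    rw [List.getElem_eraseIdx, List.getElem_eraseIdx]
    have hk : k < n - 1 := by rwa [length_eraseIdx_ofFn] at h1
    split
    · rename_i hki
      rw [List.getElem_ofFn, List.getElem_ofFn]
      exact h _ (by simp [Fin.ext_iff]; omega)
    · rename_i hki
      push_neg at hki
      rw [List.getElem_ofFn, List.getElem_ofFn]
      exact h _ (by simp [Fin.ext_iff]; omega)

/-- the m-th largest among the others (indices ≠ i) -/
noncomputable def othersKth {n : ℕ} (r : Fin n → ℝ) (i : Fin n) (m : ℕ) : ℝ :=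
  (dsort ((List.ofFn r).eraseIdx i)).getD (m - 1) 0

lemma othersKth_pos {n : ℕ} {r : Fin n → ℝ} (hr : ∀ j, 0 < r j) (i : Fin n)
    {m : ℕ} (hm : 1 ≤ m) (hmn : m < n) : 0 < othersKth r i m := by
  have hlen : m - 1 < ((List.ofFn r).eraseIdx i).length := by
    rw [length_eraseIdx_ofFn]; omega
  have := dsort_getD_mem _ hlen
  have hmem : othersKth r i m ∈ List.ofFn r :=
    (List.eraseIdx_sublist (List.ofFn r) i).mem this
  rw [List.mem_ofFn] at hmem
  obtain ⟨j, hj⟩ := hmem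
  rw [← hj]; exact hr j

/-- The key pointwise identity. -/
lemma pointwise {n m : ℕ} (hm : 1 ≤ m) (hmn : m < n) (r : Fin n → ℝ)
    (hr : ∀ j, 0 < r j) (i : Fin n) (xi : ℝ) :
    (if r i > kthLargest r m then max xi (kthLargest r m) else 0)
      = (if r i > othersKth r i m then max xi (othersKth r i m) else 0) := by
  set l := List.ofFn r with hl
  have hlen : l.length = n := by simp [hl]
  have hlen' : ((List.ofFn r).eraseIdx i).length = n - 1 := length_eraseIdx_ofFn r i
  have hmn' : m - 1 < ((List.ofFn r).eraseIdx i).length := by omega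
  have hmlen : m < l.length := by omega
  set t := othersKth r i m with htdef
  have ht1 : m ≤ ((List.ofFn r).eraseIdx i).countP (fun z => t ≤ z) := by
    have := count_ge_ge _ hmn' (le_refl ((dsort ((List.ofFn r).eraseIdx i)).getD (m-1) 0))
    have hms : m - 1 + 1 = m := by omega
    rw [hms] at this
    exact this
  have ht2 : ((List.ofFn r).eraseIdx i).countP (fun z => t < z) ≤ m - 1 :=
    count_gt_le _ hmn' (le_refl ((dsort ((List.ofFn r).eraseIdx i)).getD (m-1) 0))
  have hkth : kthLargest r m = (dsort l).getD m 0 := rfl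
  by_cases hcase : r i > t
  · -- kthLargest r m = t
    have hA : t ≤ (dsort l).getD m 0 := by
      apply le_dsort_of_count l hmlen
      rw [countP_ofFn_eraseIdx r i, if_pos (by simpa using le_of_lt hcase)]
      omega
    have hB : (dsort l).getD m 0 ≤ t := by
      apply dsort_le_of_count l hmlen
      rw [countP_ofFn_eraseIdx r i, if_pos (by simpa using hcase)]
      omega
    have heq : kthLargest r m = t := le_antisymm (hkth ▸ hB) (hkth ▸ hA)
    rw [heq]
  · -- r i ≤ t : both sides are 0
    push_neg at hcase
    have hC : r i ≤ (dsort l).getD m 0 := by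
      apply le_dsort_of_count l hmlen
      rw [countP_ofFn_eraseIdx r i, if_pos (by simp)]
      have : ((List.ofFn r).eraseIdx i).countP (fun z => t ≤ z)
          ≤ ((List.ofFn r).eraseIdx i).countP (fun z => r i ≤ z) := by
        apply List.countP_mono_left
        intro a _ ha
        simp only [decide_eq_true_eq] at ha ⊢
        exact le_trans hcase ha
      omega
    rw [if_neg (by rw [hkth]; exact not_lt.mpr hC), if_neg (not_lt.mpr hcase)]

end PriorityAux

namespace PriorityAux

lemma countP_ofFn {n : ℕ} (g : Fin n → ℝ) (p : ℝ → Bool) :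
    (List.ofFn g).countP p = ∑ j : Fin n, if p (g j) then 1 else 0 := by
  induction n with
  | zero => simp
  | succ k ih =>
    rw [List.ofFn_succ, List.countP_cons, ih, Fin.sum_univ_succ]
    ring

lemma measurable_kthLargest {n : ℕ} (k : ℕ) (hk : k < n) :
    Measurable (fun v : Fin n → ℝ => kthLargest v k) := by
  apply measurable_of_Iic
  intro y
  have hset : (fun v : Fin n → ℝ => kthLargest v k) ⁻¹' (Set.Iic y)
      = {v : Fin n → ℝ | (∑ j : Fin n, if y < v j then 1 else 0) ≤ k} := by
    ext v
    have hlen : k < (List.ofFn v).length := by simpa using hk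
    simp only [Set.mem_preimage, Set.mem_Iic, Set.mem_setOf_eq]
    rw [show kthLargest v k = (dsort (List.ofFn v)).getD k 0 from rfl,
      dsort_le_iff _ hlen, countP_ofFn]
    simp
  rw [hset]
  have : Measurable (fun v : Fin n → ℝ => ∑ j : Fin n, if y < v j then (1:ℕ) else 0) := by
    apply Finset.measurable_sum
    intro j _
    exact Measurable.ite (measurableSet_lt measurable_const (measurable_pi_apply j))
      measurable_const measurable_const
  exact this measurableSet_Iic

lemma inner_lintegral {xi t : ℝ} (hxi : 0 < xi) (ht : 0 < t) :
    ∫⁻ a in Set.Ioc (0:ℝ) 1,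
      ENNReal.ofReal (if xi / a > t then max xi t else 0) = ENNReal.ofReal xi := by
  by_cases hcase : t < xi
  · have hcong : ∀ a ∈ Set.Ioc (0:ℝ) 1,
        ENNReal.ofReal (if xi / a > t then max xi t else 0) = ENNReal.ofReal xi := by
      rintro a ⟨ha0, ha1⟩
      have h1 : xi ≤ xi / a := by
        rw [le_div_iff₀ ha0]
        calc xi * a ≤ xi * 1 := by nlinarith
          _ = xi := mul_one xi
      rw [if_pos (lt_of_lt_of_le hcase h1), max_eq_left (le_of_lt hcase)]
    rw [setLIntegral_congr_fun measurableSet_Ioc hcong,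
      setLIntegral_const, Real.volume_Ioc]
    norm_num
  · push_neg at hcase
    have hc1 : xi / t ≤ 1 := (div_le_one ht).mpr hcase
    have hc0 : 0 < xi / t := div_pos hxi ht
    have hcong : ∀ a ∈ Set.Ioc (0:ℝ) 1,
        ENNReal.ofReal (if xi / a > t then max xi t else 0)
          = (Set.Ioo (0:ℝ) (xi/t)).indicator (fun _ => ENNReal.ofReal t) a := by
      rintro a ⟨ha0, ha1⟩
      by_cases hmem : a < xi / t
      · rw [Set.indicator_of_mem (show a ∈ Set.Ioo (0:ℝ) (xi/t) from ⟨ha0, hmem⟩)]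
        have : t < xi / a := by
          rw [lt_div_iff₀ ha0]
          rw [lt_div_iff₀ ht] at hmem
          nlinarith
        rw [if_pos this, max_eq_right hcase]
      · push_neg at hmem
        rw [Set.indicator_of_notMem (by simp [Set.mem_Ioo]; intro _; linarith)]
        have : xi / a ≤ t := by
          rw [div_le_iff₀ ha0]
          rw [div_le_iff₀ ht] at hmem
          nlinarith
        rw [if_neg (not_lt.mpr this), ENNReal.ofReal_zero]
    rw [setLIntegral_congr_fun measurableSet_Ioc hcong,
      lintegral_indicator measurableSet_Ioo, Measure.restrict_restrict measurableSet_Ioo,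
      setLIntegral_const]
    have hsub : Set.Ioo (0:ℝ) (xi/t) ∩ Set.Ioc 0 1 = Set.Ioo (0:ℝ) (xi/t) := by
      apply Set.inter_eq_self_of_subset_left
      rintro a ⟨h1, h2⟩
      exact ⟨h1, le_trans (le_of_lt h2) hc1⟩
    rw [hsub, Real.volume_Ioo, ← ENNReal.ofReal_mul (le_of_lt ht)]
    congr 1
    field_simp
    ring
end PriorityAux

open PriorityAux

/-- **Priority sampling unbiasedness (unique keys).** Let `n > m ≥ 1`, let
`x 1, …, x n` be positive weights and `u 1, …, u n` i.i.d. uniform on `(0,1]`.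
With priorities `r i = x i / u i` and `z` the `(m+1)`-st largest priority, the
estimator `x̂ i = max (x i) z` if `r i > z` (i.e. `r i` is among the `m`
largest priorities, almost surely without ties) and `x̂ i = 0` otherwise,
satisfies `E[x̂ i] = x i` for every `i`. -/
theorem priority_sampling_unbiased
    {Ω : Type*} [MeasurableSpace Ω] (P : Measure Ω) [IsProbabilityMeasure P]
    (n m : ℕ) (hm : 1 ≤ m) (hmn : m < n)
    (x : Fin n → ℝ) (hx : ∀ i, 0 < x i)
    (u : Fin n → Ω → ℝ) (humeas : ∀ i, Measurable (u i))
    (hindep : ProbabilityTheory.iIndepFun u P)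
    (hunif : ∀ i, P.map (u i) = volume.restrict (Set.Ioc (0 : ℝ) 1))
    (i : Fin n) :
    ∫ ω,
        (if x i / u i ω > kthLargest (fun j => x j / u j ω) m then
          max (x i) (kthLargest (fun j => x j / u j ω) m)
        else 0) ∂P = x i := by
  classical
  haveI : IsProbabilityMeasure (volume.restrict (Set.Ioc (0:ℝ) 1)) :=
    ⟨by simp [Real.volume_Ioc]⟩
  set F : (Fin n → ℝ) → ℝ := fun v =>
    if x i / v i > kthLargest (fun j => x j / v j) m then
      max (x i) (kthLargest (fun j => x j / v j) m) else 0 with hF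
  have hrv : Measurable (fun v : Fin n → ℝ => (fun j => x j / v j)) :=
    measurable_pi_lambda _ (fun j => measurable_const.div (measurable_pi_apply j))
  have hkmeas : Measurable (fun v : Fin n → ℝ => kthLargest (fun j => x j / v j) m) :=
    (measurable_kthLargest m hmn).comp hrv
  have hFmeas : Measurable F := by
    apply Measurable.ite (measurableSet_lt hkmeas (measurable_const.div (measurable_pi_apply i)))
    · exact measurable_const.max hkmeas
    · exact measurable_const
  have hF0 : ∀ v, 0 ≤ F v := by
    intro v
    rw [hF]
    dsimp only
    split
    · exact le_trans (le_of_lt (hx i)) (le_max_left _ _)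
    · exact le_refl 0
  set U : Ω → (Fin n → ℝ) := fun ω j => u j ω with hUdef
  have hU : Measurable U := measurable_pi_lambda _ humeas
  have hmap : Measure.pi (fun _ : Fin n => volume.restrict (Set.Ioc (0:ℝ) 1)) = P.map U := by
    apply Measure.pi_eq
    intro s hs
    rw [Measure.map_apply hU (MeasurableSet.univ_pi hs)]
    have hpre : U ⁻¹' Set.univ.pi s = ⋂ j, u j ⁻¹' s j := by
      ext ω; simp [hUdef, Set.mem_pi]
    rw [hpre]
    have hbig := hindep.measure_inter_preimage_eq_mul Finset.univ (fun j _ => hs j)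
    have hiInter : (⋂ j, u j ⁻¹' s j) = ⋂ j ∈ Finset.univ, u j ⁻¹' s j := by simp
    rw [hiInter, hbig]
    apply Finset.prod_congr rfl
    intro j _
    rw [← hunif j, Measure.map_apply (humeas j) (hs j)]
  have hgoal : ∫ ω, F (U ω) ∂P = x i := by
    have hg : Measurable (fun v => ENNReal.ofReal (F v)) :=
      ENNReal.measurable_ofReal.comp hFmeas
    rw [integral_eq_lintegral_of_nonneg_ae
      (Filter.Eventually.of_forall (fun ω => hF0 (U ω)))
      ((hFmeas.comp hU).aestronglyMeasurable)]
    have hkey : ∫⁻ ω, ENNReal.ofReal (F (U ω)) ∂P = ENNReal.ofReal (x i) := by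
      rw [← lintegral_map hg hU, ← hmap]
      -- Fubini
      set p : Fin n → Prop := fun j => j = i with hp
      haveI : DecidablePred p := Classical.decPred p
      haveI : Unique {j // p j} :=
        ⟨⟨⟨i, rfl⟩⟩, by rintro ⟨j, hj⟩; exact Subtype.ext hj⟩
      set e := MeasurableEquiv.piEquivPiSubtypeProd (fun _ : Fin n => ℝ) p with he
      have hmp := measurePreserving_piEquivPiSubtypeProd
        (fun _ : Fin n => volume.restrict (Set.Ioc (0:ℝ) 1)) p
      rw [← (hmp.symm e).lintegral_comp hg]
      rw [lintegral_prod_symm (fun z => ENNReal.ofReal (F (e.symm z))) ((hg.comp e.symm.measurable).aemeasurable)]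
      -- now a double integral; reduce the inner one to an integral over ℝ
      have hfu := measurePreserving_funUnique
        (volume.restrict (Set.Ioc (0:ℝ) 1)) {j // p j}
      have hpi12 : @Measure.pi {j // p j} (fun _ => ℝ) (Subtype.fintype p)
            (fun _ => inferInstance) (fun _ => volume.restrict (Set.Ioc (0:ℝ) 1))
          = @Measure.pi {j // p j} (fun _ => ℝ) Unique.fintype
            (fun _ => inferInstance) (fun _ => volume.restrict (Set.Ioc (0:ℝ) 1)) := by
        congr 1
        exact Subsingleton.elim _ _
      have hinner : ∀ w : {j // ¬ p j} → ℝ,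
          (∫⁻ a' : {j // p j} → ℝ, ENNReal.ofReal (F (e.symm (a', w)))
              ∂(@Measure.pi {j // p j} (fun _ => ℝ) (Subtype.fintype p)
                (fun _ => inferInstance) (fun _ => volume.restrict (Set.Ioc (0:ℝ) 1))))
            = ∫⁻ a in Set.Ioc (0:ℝ) 1, ENNReal.ofReal (F (e.symm (fun _ => a, w))) := by
        intro w
        rw [hpi12]
        exact ((hfu.symm (MeasurableEquiv.funUnique {j // p j} ℝ)).lintegral_comp
          (f := fun a' : {j // p j} → ℝ => ENNReal.ofReal (F (e.symm (a', w))))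
          (hg.comp (e.symm.measurable.comp (measurable_id.prodMk measurable_const)))).symm
      refine Eq.trans (lintegral_congr (fun w => hinner w)) ?_
      -- a.e. w has all coordinates in Ioc 0 1
      have hae : ∀ᵐ w : {j // ¬ p j} → ℝ
          ∂(Measure.pi fun _ => volume.restrict (Set.Ioc (0:ℝ) 1)),
          ∀ j : {j // ¬ p j}, w j ∈ Set.Ioc (0:ℝ) 1 := by
        have hS : (Measure.pi fun _ : {j // ¬ p j} => volume.restrict (Set.Ioc (0:ℝ) 1))
            (Set.univ.pi fun _ => Set.Ioc (0:ℝ) 1) = 1 := by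
          rw [Measure.pi_pi]
          simp [Measure.restrict_apply measurableSet_Ioc, Real.volume_Ioc]
        rw [Filter.eventually_iff, mem_ae_iff]
        have hcompl : {w : {j // ¬ p j} → ℝ | ∀ j, w j ∈ Set.Ioc (0:ℝ) 1}ᶜ
            = (Set.univ.pi fun _ => Set.Ioc (0:ℝ) 1)ᶜ := by
          ext w; simp [Set.mem_pi]
        rw [hcompl]
        rw [measure_compl (MeasurableSet.univ_pi fun _ => measurableSet_Ioc) (by simp), hS]
        simp
      have hconst : ∀ᵐ w : {j // ¬ p j} → ℝ
          ∂(Measure.pi fun _ => volume.restrict (Set.Ioc (0:ℝ) 1)),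
          (∫⁻ a in Set.Ioc (0:ℝ) 1, ENNReal.ofReal (F (e.symm (fun _ => a, w))))
            = ENNReal.ofReal (x i) := by
        filter_upwards [hae] with w hw
        -- the full coordinate vector
        have hV : ∀ (a : ℝ) (j : Fin n),
            e.symm (fun _ => a, w) j = if h : p j then a else w ⟨j, h⟩ := by
          intro a j
          rfl
        -- fixed "others" value
        set r1 : Fin n → ℝ := fun j => x j / (if h : p j then 1 else w ⟨j, h⟩) with hr1
        have hr1pos : ∀ j, 0 < r1 j := by
          intro j
          rw [hr1]
          apply div_pos (hx j)
          split
          · exact one_pos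
          · exact (hw _).1
        set t : ℝ := othersKth r1 i m with htdef
        have ht : 0 < t := othersKth_pos hr1pos i hm hmn
        have hcong : ∀ a ∈ Set.Ioc (0:ℝ) 1,
            ENNReal.ofReal (F (e.symm (fun _ => a, w)))
              = ENNReal.ofReal (if x i / a > t then max (x i) t else 0) := by
          intro a ha
          congr 1
          set ra : Fin n → ℝ := fun j => x j / e.symm (fun _ => a, w) j with hra
          have hrapos : ∀ j, 0 < ra j := by
            intro j
            rw [hra]
            dsimp only
            rw [hV]
            apply div_pos (hx j)
            split
            · exact ha.1
            · exact (hw _).1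
          have hothers : othersKth ra i m = t := by
            rw [htdef]
            unfold othersKth
            rw [eraseIdx_ofFn_congr ra r1 i (fun j hj => by
              rw [hra, hr1]
              dsimp only
              rw [hV, dif_neg (show ¬ p j from hj), dif_neg (show ¬ p j from hj)])]
          have hrai : ra i = x i / a := by
            rw [hra]; dsimp only; rw [hV, dif_pos rfl]
          have hpw := pointwise hm hmn ra hrapos i (x i)
          rw [hF]
          dsimp only
          have hVi : e.symm (fun _ : {j // p j} => a, w) i = a := by
            rw [hV]; exact dif_pos rfl
          rw [hVi, ← hra]
          rw [hothers, hrai] at hpw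
          exact hpw
        rw [setLIntegral_congr_fun measurableSet_Ioc hcong]
        exact inner_lintegral (hx i) ht
      rw [lintegral_congr_ae hconst, lintegral_const]
      simp
    rw [hkey, ENNReal.toReal_ofReal (le_of_lt (hx i))]
  exact hgoal
end
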